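/- arXiv:1705.01742 — 2 statements merged into one kernel-verified Lean document; each statement's English description precedes it below -/
import Mathlib

section
/- Let a > 0 and let f : ℝ² → ℝ be Lipschitz with constant Lip(f). Then there exists L > 0 depending only on a and Lip(f) (e.g. L = a + 2·osc(f) suffices when y₃ lies between ε f(y'/ε) and aε + ε f(y'/ε)) such that for all x', y' ∈ ℝ², ε > 0, and all y₃ ∈ (ε f(y'/ε), aε + ε f(y'/ε)): |1/√(|x'−y'|² + (ε f(x'/ε) − y₃)²) − 1/√(|x'−y'|² + (aε + ε f(x'/ε) − y₃)²)| ≤ 1/|x'−y'| − 1/√(|x'−y'|² + ε²L²). -/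
open MeasureTheory

/-- Helper: monotone bounds on `1/√(r²+u²)`. -/
lemma sqrt_inv_bounds (r u M : ℝ) (hr : 0 < r) (hu : u ^ 2 ≤ M) (hM : 0 ≤ M) :
    1 / Real.sqrt (r ^ 2 + M) ≤ 1 / Real.sqrt (r ^ 2 + u ^ 2) ∧
      1 / Real.sqrt (r ^ 2 + u ^ 2) ≤ 1 / r := by
  have h1 : Real.sqrt (r ^ 2 + u ^ 2) ≤ Real.sqrt (r ^ 2 + M) :=
    Real.sqrt_le_sqrt (by linarith)
  have h2 : r ≤ Real.sqrt (r ^ 2 + u ^ 2) := by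
    have : r = Real.sqrt (r ^ 2) := (Real.sqrt_sq hr.le).symm
    rw [this]
    exact Real.sqrt_le_sqrt (by nlinarith [sq_nonneg u, sq_nonneg r])
  have hpos : 0 < Real.sqrt (r ^ 2 + u ^ 2) := lt_of_lt_of_le hr h2
  constructor
  · exact one_div_le_one_div_of_le hpos h1
  · exact one_div_le_one_div_of_le hr h2

/-- Let `a > 0` and `f : ℝ² → ℝ` be bounded and Lipschitz.  Then there is `L > 0`
(depending only on `a` and the Lipschitz/oscillation data of `f`) such that for all
`x' ≠ y'`, `ε > 0` and `y₃ ∈ (ε f(y'/ε), aε + ε f(y'/ε))`,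
`|1/√(|x'−y'|² + (ε f(x'/ε) − y₃)²) − 1/√(|x'−y'|² + (aε + ε f(x'/ε) − y₃)²)|
  ≤ 1/|x'−y'| − 1/√(|x'−y'|² + ε²L²)`. -/
theorem stmt3 (a : ℝ) (ha : 0 < a) (f : EuclideanSpace ℝ (Fin 2) → ℝ)
    (K : NNReal) (hf : LipschitzWith K f) (C : ℝ) (hbd : ∀ x, |f x| ≤ C) :
    ∃ L > 0, ∀ (x' y' : EuclideanSpace ℝ (Fin 2)) (ε y₃ : ℝ), 0 < ε → x' ≠ y' →
      y₃ ∈ Set.Ioo (ε * f (ε⁻¹ • y')) (a * ε + ε * f (ε⁻¹ • y')) →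
      |1 / Real.sqrt (‖x' - y'‖ ^ 2 + (ε * f (ε⁻¹ • x') - y₃) ^ 2)
          - 1 / Real.sqrt (‖x' - y'‖ ^ 2 + (a * ε + ε * f (ε⁻¹ • x') - y₃) ^ 2)|
        ≤ 1 / ‖x' - y'‖ - 1 / Real.sqrt (‖x' - y'‖ ^ 2 + ε ^ 2 * L ^ 2) := by
  have hC : 0 ≤ C := le_trans (abs_nonneg _) (hbd 0)
  refine ⟨a + 2 * C, by linarith, ?_⟩
  intro x' y' ε y₃ hε hxy hy
  obtain ⟨h1, h2⟩ := hy
  set r : ℝ := ‖x' - y'‖ with hrdef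
  have hr : 0 < r := by
    rw [hrdef, norm_pos_iff]
    exact sub_ne_zero_of_ne hxy
  have hfx := hbd (ε⁻¹ • x')
  have hfy := hbd (ε⁻¹ • y')
  have hfx' := abs_le.mp hfx
  have hfy' := abs_le.mp hfy
  have hL2 : 0 ≤ ε ^ 2 * (a + 2 * C) ^ 2 := by positivity
  have hp1 : ε * f (ε⁻¹ • x') ≤ ε * C := mul_le_mul_of_nonneg_left hfx'.2 hε.le
  have hp2 : ε * (-C) ≤ ε * f (ε⁻¹ • x') := mul_le_mul_of_nonneg_left hfx'.1 hε.le
  have hp3 : ε * f (ε⁻¹ • y') ≤ ε * C := mul_le_mul_of_nonneg_left hfy'.2 hε.le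
  have hp4 : ε * (-C) ≤ ε * f (ε⁻¹ • y') := mul_le_mul_of_nonneg_left hfy'.1 hε.le
  have hexp : ε * (a + 2 * C) = a * ε + 2 * (ε * C) := by ring
  have hs : (ε * f (ε⁻¹ • x') - y₃) ^ 2 ≤ ε ^ 2 * (a + 2 * C) ^ 2 := by
    rw [show ε ^ 2 * (a + 2 * C) ^ 2 = (ε * (a + 2 * C)) ^ 2 by ring]
    apply sq_le_sq'
    · nlinarith [mul_pos ha hε, hp1, hp2, hp3, hp4, hexp]
    · nlinarith [mul_pos ha hε, hp1, hp2, hp3, hp4, hexp]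
  have ht : (a * ε + ε * f (ε⁻¹ • x') - y₃) ^ 2 ≤ ε ^ 2 * (a + 2 * C) ^ 2 := by
    rw [show ε ^ 2 * (a + 2 * C) ^ 2 = (ε * (a + 2 * C)) ^ 2 by ring]
    apply sq_le_sq'
    · nlinarith [mul_pos ha hε, hp1, hp2, hp3, hp4, hexp]
    · nlinarith [mul_pos ha hε, hp1, hp2, hp3, hp4, hexp]
  obtain ⟨hA1, hA2⟩ := sqrt_inv_bounds r (ε * f (ε⁻¹ • x') - y₃) (ε ^ 2 * (a + 2 * C) ^ 2) hr hs hL2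
  obtain ⟨hB1, hB2⟩ := sqrt_inv_bounds r (a * ε + ε * f (ε⁻¹ • x') - y₃) (ε ^ 2 * (a + 2 * C) ^ 2) hr ht hL2
  rw [abs_sub_le_iff]
  constructor <;> linarith
end

section
/- Let f : ℝ² → ℝ be Q-periodic and Lipschitz with |∇f| ≤ ℓ a.e., let a > 0, set n(x') := (−∇f(x'), 1) ∈ ℝ³, and define Γ_ε(x',y') := (2πε)^{-1} [ n(y'/ε)⊗n(x'/ε) / √(|x'−y'|² + ε²|f(x'/ε)−f(y'/ε)|²) − n(y'/ε)⊗n(x'/ε) / √(|x'−y'|² + ε²|a+f(x'/ε)−f(y'/ε)|²) ]. Then there exists L > 0 depending only on ℓ and a such that |Γ_ε(x',y')| ≤ (L/(2πε)) [ 1/|x'−y'| − 1/√(|x'−y'|²+ε²L²) ] for all x' ≠ y' and all ε > 0. -/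
open MeasureTheory Real

noncomputable section

/-!
Periodicity confines `f` to a fundamental cell, where the gradient bound makes it Lipschitz, so
`f` has oscillation at most `4ℓ`. Hence both heights `f(x'/ε) - f(y'/ε)` and
`a + f(x'/ε) - f(y'/ε)` lie in `[-L, L]`, and since `u ↦ 1/√(r² + u)` is antitone, the difference
of the two scalar kernels is at most its total drop `1/r - 1/√(r² + ε²L²)` on `[0, ε²L²]`.
The Frobenius norm of `n ⊗ m` is `|n||m|`, and `|n|² = 1 + |∇f|² ≤ 1 + ℓ² ≤ L`.
-/

/-- The surface normal vector `n(x') = (−∇f(x'), 1) ∈ ℝ³`. -/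
def surfNormal (f : EuclideanSpace ℝ (Fin 2) → ℝ) (x : EuclideanSpace ℝ (Fin 2)) :
    Fin 3 → ℝ := fun i =>
  if h : (i : ℕ) < 2 then -(fderiv ℝ f x (EuclideanSpace.single ⟨i, h⟩ 1)) else 1

theorem Function.Periodic.of_mem_span_int {E α : Type*} [AddCommGroup E] {f : E → α}
    {s : Set E} (h : ∀ c ∈ s, Function.Periodic f c) {v : E}
    (hv : v ∈ Submodule.span ℤ s) : Function.Periodic f v := by
  induction hv using Submodule.span_induction with
  | mem c hc => exact h c hc
  | zero => exact fun x => by rw [add_zero]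
  | add c d _ _ hc hd => exact hc.add_period hd
  | smul n c _ hc => exact hc.zsmul n

section Oscillation

variable {E F ι : Type*} [NormedAddCommGroup E] [NormedSpace ℝ E]
  [NormedAddCommGroup F] [NormedSpace ℝ F] [Fintype ι]

theorem apply_zspan_fract {α : Type*} {f : E → α} (b : Module.Basis ι ℝ E)
    (hper : ∀ i, Function.Periodic f (b i)) (m : E) : f (ZSpan.fract b m) = f m := by
  have hfloor : Function.Periodic f (ZSpan.floor b m) :=
    Function.Periodic.of_mem_span_int (by rintro _ ⟨i, rfl⟩; exact hper i) (ZSpan.floor b m).2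
  rw [← hfloor, ZSpan.fract_apply, sub_add_cancel]

theorem norm_sub_le_of_periodic_of_norm_fderiv_le {f : E → F} {ℓ : ℝ} (b : Module.Basis ι ℝ E)
    (hf : Differentiable ℝ f) (hℓ : ∀ x, ‖fderiv ℝ f x‖ ≤ ℓ)
    (hper : ∀ i, Function.Periodic f (b i)) (u v : E) :
    ‖f u - f v‖ ≤ ℓ * (2 * ∑ i, ‖b i‖) := by
  have hℓ0 : 0 ≤ ℓ := (norm_nonneg _).trans (hℓ u)
  rw [← apply_zspan_fract b hper u, ← apply_zspan_fract b hper v]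
  calc ‖f (ZSpan.fract b u) - f (ZSpan.fract b v)‖
      ≤ ℓ * ‖ZSpan.fract b u - ZSpan.fract b v‖ :=
        convex_univ.norm_image_sub_le_of_norm_fderiv_le (fun x _ => hf x) (fun x _ => hℓ x)
          (Set.mem_univ _) (Set.mem_univ _)
    _ ≤ ℓ * (2 * ∑ i, ‖b i‖) := by
        gcongr
        linarith [norm_sub_le (ZSpan.fract b u) (ZSpan.fract b v), ZSpan.norm_fract_le b u,
          ZSpan.norm_fract_le b v]

theorem norm_sub_le_of_periodic_single_of_norm_fderiv_le [DecidableEq ι]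
    {f : EuclideanSpace ℝ ι → F} {ℓ : ℝ} (hf : Differentiable ℝ f)
    (hℓ : ∀ x, ‖fderiv ℝ f x‖ ≤ ℓ)
    (hper : ∀ i, Function.Periodic f (EuclideanSpace.single i 1)) (u v : EuclideanSpace ℝ ι) :
    ‖f u - f v‖ ≤ ℓ * (2 * Fintype.card ι) := by
  simpa using norm_sub_le_of_periodic_of_norm_fderiv_le
    (EuclideanSpace.basisFun ι ℝ).toBasis hf hℓ (by simpa using hper) u v

end Oscillation

theorem sum_sq_apply_single_eq_norm_sq {ι : Type*} [Fintype ι] [DecidableEq ι]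
    (φ : EuclideanSpace ℝ ι →L[ℝ] ℝ) :
    ∑ i, φ (EuclideanSpace.single i 1) ^ 2 = ‖φ‖ ^ 2 := by
  obtain ⟨g, rfl⟩ := (InnerProductSpace.toDual ℝ (EuclideanSpace ℝ ι)).surjective φ
  simp [EuclideanSpace.inner_single_right, EuclideanSpace.norm_sq_eq]

theorem sum_sq_surfNormal (f : EuclideanSpace ℝ (Fin 2) → ℝ) (x : EuclideanSpace ℝ (Fin 2)) :
    ∑ i, surfNormal f x i ^ 2 = 1 + ‖fderiv ℝ f x‖ ^ 2 := by
  rw [← sum_sq_apply_single_eq_norm_sq, Fin.sum_univ_three, Fin.sum_univ_two]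
  simp [surfNormal]
  ring

theorem sum_sum_sq_mul_outer_mul {ι κ : Type*} [Fintype ι] [Fintype κ]
    (c D : ℝ) (N : ι → ℝ) (M : κ → ℝ) :
    ∑ i, ∑ j, (c * (N i * M j) * D) ^ 2 = (c * D) ^ 2 * (∑ i, N i ^ 2) * ∑ j, M j ^ 2 := by
  rw [mul_assoc, Finset.sum_mul_sum, Finset.mul_sum]
  refine Finset.sum_congr rfl fun i _ => ?_
  rw [Finset.mul_sum]
  exact Finset.sum_congr rfl fun j _ => by ring

theorem sqrt_sum_sum_sq_mul_outer_mul_le {ι κ : Type*} [Fintype ι] [Fintype κ]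
    {c D A K : ℝ} {N : ι → ℝ} {M : κ → ℝ} (hc : 0 ≤ c) (hN : ∑ i, N i ^ 2 ≤ A)
    (hM : ∑ j, M j ^ 2 ≤ A) (hD : |D| ≤ K) :
    √(∑ i, ∑ j, (c * (N i * M j) * D) ^ 2) ≤ c * A * K := by
  have hA : 0 ≤ A := (Finset.sum_nonneg fun i _ => sq_nonneg (N i)).trans hN
  have hK : 0 ≤ K := (abs_nonneg D).trans hD
  rw [sum_sum_sq_mul_outer_mul, mul_assoc, sqrt_mul (sq_nonneg _), sqrt_sq_eq_abs, abs_mul,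
    abs_of_nonneg hc]
  calc c * |D| * √((∑ i, N i ^ 2) * ∑ j, M j ^ 2)
      ≤ c * K * √(A * A) := by gcongr
    _ = c * A * K := by rw [sqrt_mul_self hA]; ring

theorem AntitoneOn.abs_sub_le {g : ℝ → ℝ} {a b s t : ℝ} (hg : AntitoneOn g (Set.Icc a b))
    (hs : s ∈ Set.Icc a b) (ht : t ∈ Set.Icc a b) : |g s - g t| ≤ g a - g b := by
  have ha : a ∈ Set.Icc a b := ⟨le_rfl, hs.1.trans hs.2⟩
  have hb : b ∈ Set.Icc a b := ⟨hs.1.trans hs.2, le_rfl⟩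
  rw [abs_sub_le_iff]
  constructor <;> linarith [hg ha hs hs.1, hg ha ht ht.1, hg hs hb hs.2, hg ht hb ht.2]

theorem antitoneOn_one_div_sqrt_sq_add {r : ℝ} (hr : r ≠ 0) :
    AntitoneOn (fun u => 1 / √(r ^ 2 + u)) (Set.Ici 0) := fun u hu _ _ huv =>
  have : 0 ≤ u := hu
  one_div_le_one_div_of_le (sqrt_pos.2 (by positivity)) (sqrt_le_sqrt (by linarith))

theorem abs_one_div_sqrt_sub_le {r ε s t L : ℝ} (hr : 0 < r) (hs : |s| ≤ L) (ht : |t| ≤ L) :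
    |1 / √(r ^ 2 + ε ^ 2 * s ^ 2) - 1 / √(r ^ 2 + ε ^ 2 * t ^ 2)|
      ≤ 1 / r - 1 / √(r ^ 2 + ε ^ 2 * L ^ 2) := by
  have hmem : ∀ w, |w| ≤ L → ε ^ 2 * w ^ 2 ∈ Set.Icc 0 (ε ^ 2 * L ^ 2) := fun w hw =>
    ⟨by positivity,
      mul_le_mul_of_nonneg_left (sq_le_sq' (abs_le.1 hw).1 (abs_le.1 hw).2) (sq_nonneg ε)⟩
  have h := ((antitoneOn_one_div_sqrt_sq_add hr.ne').mono Set.Icc_subset_Ici_self).abs_sub_le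
    (hmem s hs) (hmem t ht)
  simpa [sqrt_sq hr.le] using h

theorem stmt19_general (f : EuclideanSpace ℝ (Fin 2) → ℝ) (hf : Differentiable ℝ f)
    (ℓ : ℝ) (hℓ : ∀ x, ‖fderiv ℝ f x‖ ≤ ℓ)
    (hper : ∀ (y : EuclideanSpace ℝ (Fin 2)) (i : Fin 2),
      f (y + EuclideanSpace.single i 1) = f y)
    (a : ℝ) :
    ∃ L > 0, ∀ ε > (0 : ℝ), ∀ x y : EuclideanSpace ℝ (Fin 2), x ≠ y →
      Real.sqrt (∑ i : Fin 3, ∑ j : Fin 3,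
          ((2 * π * ε)⁻¹ * (surfNormal f (ε⁻¹ • y) i * surfNormal f (ε⁻¹ • x) j) *
            (1 / Real.sqrt (‖x - y‖ ^ 2 + ε ^ 2 * (f (ε⁻¹ • x) - f (ε⁻¹ • y)) ^ 2)
              - 1 / Real.sqrt (‖x - y‖ ^ 2 + ε ^ 2 * (a + f (ε⁻¹ • x) - f (ε⁻¹ • y)) ^ 2))) ^ 2)
        ≤ L / (2 * π * ε) * (1 / ‖x - y‖ - 1 / Real.sqrt (‖x - y‖ ^ 2 + ε ^ 2 * L ^ 2)) := by
  have hℓ0 : 0 ≤ ℓ := (norm_nonneg _).trans (hℓ 0)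
  have hosc : ∀ u v, |f u - f v| ≤ 4 * ℓ := fun u v => by
    have h := norm_sub_le_of_periodic_single_of_norm_fderiv_le hf hℓ (fun i y => hper y i) u v
    norm_num at h
    linarith
  refine ⟨1 + ℓ ^ 2 + |a| + 4 * ℓ, by positivity, fun ε hε x y hxy => ?_⟩
  set L := 1 + ℓ ^ 2 + |a| + 4 * ℓ
  set p := ε⁻¹ • x
  set q := ε⁻¹ • y
  have hD := abs_one_div_sqrt_sub_le (ε := ε) (L := L) (s := f p - f q) (t := a + f p - f q)
    (norm_sub_pos_iff.2 hxy) (by linarith [hosc p q, abs_nonneg a, sq_nonneg ℓ])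
    (by rw [add_sub_assoc]; linarith [abs_add_le a (f p - f q), hosc p q, sq_nonneg ℓ])
  have hn : ∀ u, ∑ i, surfNormal f u i ^ 2 ≤ 1 + ℓ ^ 2 := fun u => by
    rw [sum_sq_surfNormal]
    gcongr
    exact hℓ u
  calc _ ≤ (2 * π * ε)⁻¹ * (1 + ℓ ^ 2) * (1 / ‖x - y‖ - 1 / √(‖x - y‖ ^ 2 + ε ^ 2 * L ^ 2)) :=
        sqrt_sum_sum_sq_mul_outer_mul_le (by positivity) (hn q) (hn p) hD
    _ ≤ L / (2 * π * ε) * (1 / ‖x - y‖ - 1 / √(‖x - y‖ ^ 2 + ε ^ 2 * L ^ 2)) := by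
        rw [div_eq_inv_mul L]
        gcongr
        · exact (abs_nonneg _).trans hD
        · linarith [abs_nonneg a]

/-- Kernel bound: for `f` `Q`-periodic with `|∇f| ≤ ℓ` and `a > 0`, the matrix kernel
`Γ_ε(x',y') = (2πε)⁻¹ [ n(y'/ε)⊗n(x'/ε)/√(|x'−y'|²+ε²|f(x'/ε)−f(y'/ε)|²)
  − n(y'/ε)⊗n(x'/ε)/√(|x'−y'|²+ε²|a+f(x'/ε)−f(y'/ε)|²) ]` satisfies
`|Γ_ε(x',y')| ≤ (L/(2πε)) (1/|x'−y'| − 1/√(|x'−y'|²+ε²L²))` for some `L = L(ℓ,a) > 0`,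
all `x' ≠ y'` and all `ε > 0` (Frobenius norm on matrices). -/
theorem stmt19 (f : EuclideanSpace ℝ (Fin 2) → ℝ) (hf : Differentiable ℝ f)
    (ℓ : ℝ) (hℓ : ∀ x, ‖fderiv ℝ f x‖ ≤ ℓ)
    (hper : ∀ (y : EuclideanSpace ℝ (Fin 2)) (i : Fin 2),
      f (y + EuclideanSpace.single i 1) = f y)
    (a : ℝ) (ha : 0 < a) :
    ∃ L > 0, ∀ ε > (0 : ℝ), ∀ x y : EuclideanSpace ℝ (Fin 2), x ≠ y →
      Real.sqrt (∑ i : Fin 3, ∑ j : Fin 3,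
          ((2 * π * ε)⁻¹ * (surfNormal f (ε⁻¹ • y) i * surfNormal f (ε⁻¹ • x) j) *
            (1 / Real.sqrt (‖x - y‖ ^ 2 + ε ^ 2 * (f (ε⁻¹ • x) - f (ε⁻¹ • y)) ^ 2)
              - 1 / Real.sqrt (‖x - y‖ ^ 2 + ε ^ 2 * (a + f (ε⁻¹ • x) - f (ε⁻¹ • y)) ^ 2))) ^ 2)
        ≤ L / (2 * π * ε) * (1 / ‖x - y‖ - 1 / Real.sqrt (‖x - y‖ ^ 2 + ε ^ 2 * L ^ 2)) :=
  stmt19_general f hf ℓ hℓ hper a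
end
end
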